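/- The trivialisation map f ↦ f/λ₁² intertwines the homogeneous degree-2 Poisson bracket with the inhomogeneous Jacobi bracket: if f, g are Laurent polynomials in (μ⁰,μ¹,λ₀,λ₁) homogeneous of total degree 2, then ({f,g}_Λ)/λ₁² expressed in the coordinates v^{α̇} = μ^{α̇}/λ₁, z = λ₀/λ₁ equals the Jacobi bracket {f/λ₁², g/λ₁²} given by ∂_{v⁰}F ∂_{v¹}G − ∂_{v¹}F ∂_{v⁰}G + Λ((v^{α̇}∂_{v^{α̇}}F − 2F)∂_z G − (v^{α̇}∂_{v^{α̇}}G − 2G)∂_z F). -/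

import Mathlib

/-!
A Laurent polynomial `f` homogeneous of degree 2 satisfies Euler's identity
`μ^{α̇}∂_{μ^{α̇}}f + λ₀∂_{λ₀}f + λ₁∂_{λ₁}f = 2f` wherever it is differentiable, in particular off the
coordinate hyperplanes. At `λ₁ = 1` the chain rule identifies `∂_{v^{α̇}}F, ∂_z F` with
`∂_{μ^{α̇}}f, ∂_{λ₀}f`, and Euler's identity expresses `∂_{λ₁}f` through them and `F`;
substituting into `{f,g}_Λ` gives the Jacobi bracket.
-/

/-- Partial derivative in the `i`-th coordinate of a function on `ℂ⁴`. -/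
noncomputable def pd4 (i : Fin 4) (f : (Fin 4 → ℂ) → ℂ) (p : Fin 4 → ℂ) : ℂ :=
  fderiv ℂ f p (Pi.single i 1)

/-- Partial derivative in the `i`-th coordinate of a function on `ℂ³`. -/
noncomputable def pd3 (i : Fin 3) (F : (Fin 3 → ℂ) → ℂ) (q : Fin 3 → ℂ) : ℂ :=
  fderiv ℂ F q (Pi.single i 1)

/-- The homogeneous Λ-deformed Poisson bracket in the twistor coordinates
`(μ⁰, μ¹, λ₀, λ₁)` (indexed `0,1,2,3`):
`{f,g}_Λ = ∂_{μ⁰}f ∂_{μ¹}g − ∂_{μ¹}f ∂_{μ⁰}g + Λ(∂_{λ₀}f ∂_{λ₁}g − ∂_{λ₁}f ∂_{λ₀}g)`. -/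
noncomputable def pb4 (Λ : ℂ) (f g : (Fin 4 → ℂ) → ℂ) (p : Fin 4 → ℂ) : ℂ :=
  pd4 0 f p * pd4 1 g p - pd4 1 f p * pd4 0 g p
    + Λ * (pd4 2 f p * pd4 3 g p - pd4 3 f p * pd4 2 g p)

/-- The inhomogeneous Jacobi bracket in the coordinates `(v⁰, v¹, z)`
(indexed `0,1,2`):
`{F,G} = ∂_{v⁰}F ∂_{v¹}G − ∂_{v¹}F ∂_{v⁰}G
  + Λ((v^{α̇}∂_{v^{α̇}}F − 2F)∂_z G − (v^{α̇}∂_{v^{α̇}}G − 2G)∂_z F)`. -/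
noncomputable def jb3 (Λ : ℂ) (F G : (Fin 3 → ℂ) → ℂ) (q : Fin 3 → ℂ) : ℂ :=
  pd3 0 F q * pd3 1 G q - pd3 1 F q * pd3 0 G q
    + Λ * ((q 0 * pd3 0 F q + q 1 * pd3 1 F q - 2 * F q) * pd3 2 G q
         - (q 0 * pd3 0 G q + q 1 * pd3 1 G q - 2 * G q) * pd3 2 F q)

/-- `f` is (the function of) a Laurent polynomial in the four twistor
coordinates, homogeneous of total degree 2. -/
def IsLaurentDeg2 (f : (Fin 4 → ℂ) → ℂ) : Prop :=
  ∃ (S : Finset (Fin 4 → ℤ)) (c : (Fin 4 → ℤ) → ℂ),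
    (∀ e ∈ S, e 0 + e 1 + e 2 + e 3 = 2) ∧
    ∀ p : Fin 4 → ℂ, f p = ∑ e ∈ S, c e * ∏ i : Fin 4, p i ^ (e i)

/-- The trivialisation `f ↦ f/λ₁²` in the coordinates `v^{α̇} = μ^{α̇}/λ₁`,
`z = λ₀/λ₁`: for homogeneous degree-2 `f` this is `F(v⁰,v¹,z) = f(v⁰,v¹,z,1)`. -/
noncomputable def triv (f : (Fin 4 → ℂ) → ℂ) : (Fin 3 → ℂ) → ℂ :=
  fun q => f ![q 0, q 1, q 2, 1]

open Filter Topology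

theorem fderiv_apply_self_of_homogeneous {𝕜 E F : Type*} [NontriviallyNormedField 𝕜]
    [NormedAddCommGroup E] [NormedSpace 𝕜 E] [NormedAddCommGroup F] [NormedSpace 𝕜 F]
    {f : E → F} {x : E} (k : ℕ)
    (hf : DifferentiableAt 𝕜 f x) (hhom : ∀ᶠ t in 𝓝 (1 : 𝕜), f (t • x) = t ^ k • f x) :
    fderiv 𝕜 f x x = (k : 𝕜) • f x := by
  have hline : HasDerivAt (fun t : 𝕜 => f (t • x)) (fderiv 𝕜 f x x) 1 := by
    have hsmul : HasDerivAt (fun t : 𝕜 => t • x) x 1 := by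
      simpa using (hasDerivAt_id (1 : 𝕜)).smul_const x
    exact hf.hasFDerivAt.comp_hasDerivAt_of_eq 1 hsmul (one_smul 𝕜 x).symm
  have hpow : HasDerivAt (fun t : 𝕜 => t ^ k • f x) ((k : 𝕜) • f x) 1 := by
    simpa using (hasDerivAt_pow k (1 : 𝕜)).smul_const (f x)
  exact hline.unique (hpow.congr_of_eventuallyEq hhom)

theorem ContinuousLinearMap.apply_eq_sum_smul_pi_single {ι R M : Type*} [Fintype ι]
    [DecidableEq ι] [Semiring R] [TopologicalSpace R] [AddCommMonoid M] [TopologicalSpace M]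
    [Module R M] (L : (ι → R) →L[R] M) (v : ι → R) :
    L v = ∑ i, v i • L (Pi.single i 1) := by
  conv_lhs => rw [pi_eq_sum_univ' v, map_sum]
  simp only [map_smul]

namespace IsLaurentDeg2

variable {f : (Fin 4 → ℂ) → ℂ}

theorem differentiableAt (hf : IsLaurentDeg2 f) {p : Fin 4 → ℂ} (hp : ∀ i, p i ≠ 0) :
    DifferentiableAt ℂ f p := by
  obtain ⟨S, c, -, hfeq⟩ := hf
  rw [show f = _ from funext hfeq]
  fun_prop (disch := simp [hp])

theorem map_smul (hf : IsLaurentDeg2 f) {t : ℂ} (ht : t ≠ 0) (p : Fin 4 → ℂ) :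
    f (t • p) = t ^ 2 * f p := by
  obtain ⟨S, c, hS, hfeq⟩ := hf
  simp only [hfeq, Finset.mul_sum, Pi.smul_apply, smul_eq_mul, mul_zpow, Finset.prod_mul_distrib]
  refine Finset.sum_congr rfl fun e he => ?_
  rw [Fin.prod_univ_four, ← zpow_add₀ ht, ← zpow_add₀ ht, ← zpow_add₀ ht, hS e he]
  norm_cast
  ring

theorem sum_mul_pd4 (hf : IsLaurentDeg2 f) {p : Fin 4 → ℂ} (hp : ∀ i, p i ≠ 0) :
    ∑ i, p i * pd4 i f p = 2 * f p := by
  have hhom : ∀ᶠ t in 𝓝 (1 : ℂ), f (t • p) = t ^ 2 • f p :=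
    (eventually_ne_nhds one_ne_zero).mono fun t ht => hf.map_smul ht p
  have heuler := fderiv_apply_self_of_homogeneous 2 (hf.differentiableAt hp) hhom
  rw [ContinuousLinearMap.apply_eq_sum_smul_pi_single] at heuler
  simpa [pd4] using heuler

end IsLaurentDeg2

theorem pd3_triv {f : (Fin 4 → ℂ) → ℂ} {a b c : ℂ}
    (hf : DifferentiableAt ℂ f ![a, b, c, 1]) (i : Fin 3) :
    pd3 i (triv f) ![a, b, c] = pd4 i.castSucc f ![a, b, c, 1] := by
  let L : (Fin 3 → ℂ) →L[ℂ] (Fin 4 → ℂ) := ContinuousLinearMap.pi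
    ![ContinuousLinearMap.proj 0, ContinuousLinearMap.proj 1, ContinuousLinearMap.proj 2, 0]
  have hL : HasFDerivAt (fun q : Fin 3 → ℂ => ![q 0, q 1, q 2, 1]) L ![a, b, c] := by
    rw [hasFDerivAt_pi']
    intro j
    fin_cases j <;> simp [L, hasFDerivAt_apply, hasFDerivAt_const]
  have hLi : L (Pi.single i 1) = Pi.single i.castSucc 1 := by
    fin_cases i <;> ext j <;> fin_cases j <;> simp [L]
  rw [pd3, pd4, ← hLi]
  exact congrArg (· (Pi.single i 1))
    (hf.hasFDerivAt.comp (f := fun q : Fin 3 → ℂ => ![q 0, q 1, q 2, 1]) _ hL).fderiv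

/-- The trivialisation `f ↦ f/λ₁²` intertwines the homogeneous degree-2
Poisson bracket with the inhomogeneous Jacobi bracket. -/
theorem trivialisation_intertwines (Λ : ℂ) (f g : (Fin 4 → ℂ) → ℂ)
    (hf : IsLaurentDeg2 f) (hg : IsLaurentDeg2 g)
    (v₀ v₁ z : ℂ) (hv₀ : v₀ ≠ 0) (hv₁ : v₁ ≠ 0) (hz : z ≠ 0) :
    pb4 Λ f g ![v₀, v₁, z, 1] = jb3 Λ (triv f) (triv g) ![v₀, v₁, z] := by
  have hp : ∀ i, (![v₀, v₁, z, 1] : Fin 4 → ℂ) i ≠ 0 := by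
    intro i
    fin_cases i <;> simp [hv₀, hv₁, hz]
  have euler_f := hf.sum_mul_pd4 hp
  have euler_g := hg.sum_mul_pd4 hp
  simp only [Fin.sum_univ_four, Matrix.cons_val_zero, Matrix.cons_val_one, Matrix.cons_val,
    one_mul] at euler_f euler_g
  simp only [pb4, jb3, triv, pd3_triv (hf.differentiableAt hp), pd3_triv (hg.differentiableAt hp),
    Fin.castSucc_zero, Fin.castSucc_one, Fin.reduceCastSucc, Matrix.cons_val_zero,
    Matrix.cons_val_one, Matrix.cons_val]
  -- Euler's identity at `λ₁ = 1` trades `∂_{λ₁}` for `2 - v^{α̇}∂_{v^{α̇}} - z ∂_z`; the `z ∂_z` terms cancel.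
  linear_combination Λ * (pd4 2 f ![v₀, v₁, z, 1] * euler_g - pd4 2 g ![v₀, v₁, z, 1] * euler_f)
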